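/- Let X₁, …, X_n, X_{n+1} be exchangeable (in particular, i.i.d.) real-valued random variables with almost surely distinct values, and let q be the ⌈(1−ε)(n+1)⌉-th smallest value among X₁, …, X_n (assuming ⌈(1−ε)(n+1)⌉ ≤ n). Then P(X_{n+1} ≤ q) ≥ 1 − ε. -/

import Mathlib

/-!
Let `R` be the rank of the test score `X (last n)` among all `n + 1` scores, i.e. the number of
scores strictly below it. The test score is at most the `k`-th smallest calibration score exactly
when fewer than `k` calibration scores lie below it, i.e. when `R < k`. When the scores are
distinct, the ranks of the `n + 1` scores are a permutation of `0, …, n`, so exactly `k` of the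
events `{rank of X j < k}` occur; by exchangeability these events all have the same probability,
which is therefore `k / (n + 1) ≥ 1 - ε`.
-/

open Finset MeasureTheory

theorem List.countP_ofFn {α : Type*} {n : ℕ} (f : Fin n → α) (p : α → Prop)
    [DecidablePred p] :
    (List.ofFn f).countP (fun a => decide (p a)) = #{i | p (f i)} := by
  rw [Finset.card_def, Finset.filter_val, ← Multiset.countP_map, Fin.univ_val_map,
    Multiset.coe_countP]

section Order

variable {α : Type*} [LinearOrder α]

theorem Monotone.apply_lt_iff_lt_card_filter_lt {m : ℕ} {f : Fin m → α} (hf : Monotone f)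
    (t : α) (j : Fin m) : f j < t ↔ (j : ℕ) < #{i | f i < t} := by
  constructor
  · intro h
    calc (j : ℕ) < #(Iic j) := by simp
      _ ≤ #{i | f i < t} := card_le_card fun i hi => by
        simpa using (hf (mem_Iic.mp hi)).trans_lt h
  · intro h
    by_contra! h'
    have : #{i | f i < t} ≤ #(Iio j) := card_le_card fun i hi => by
      simp only [mem_filter, mem_univ, true_and] at hi
      exact mem_Iio.mpr (lt_of_not_ge fun hji => (h'.trans (hf hji)).not_gt hi)
    simp only [Fin.card_Iio] at this
    omega

theorem List.SortedLE.getElem_lt_iff_lt_countP {l : List α} (hl : l.SortedLE) (t : α) {j : ℕ}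
    (hj : j < l.length) : l[j] < t ↔ j < l.countP (· < t) := by
  conv_rhs => rw [← List.ofFn_getElem (xs := l), List.countP_ofFn]
  exact Monotone.apply_lt_iff_lt_card_filter_lt (f := fun i : Fin l.length => l[i]) hl t ⟨j, hj⟩

theorem List.le_insertionSort_getD_iff {l : List α} (t d : α) {j : ℕ} (hj : j < l.length) :
    t ≤ (l.insertionSort (· ≤ ·)).getD j d ↔ l.countP (· < t) ≤ j := by
  have hj' : j < (l.insertionSort (· ≤ ·)).length := by rwa [List.length_insertionSort]
  rw [List.getD_eq_getElem _ _ hj', ← not_lt, ← not_lt,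
    List.sortedLE_insertionSort.getElem_lt_iff_lt_countP t hj',
    (List.perm_insertionSort _ l).countP_eq]

end Order

section Rank

variable {ι α : Type*} [Fintype ι] [LinearOrder α]

def rank (x : ι → α) (j : ι) : ℕ := #{i | x i < x j}

theorem rank_lt_card (x : ι → α) (j : ι) : rank x j < Fintype.card ι :=
  card_lt_univ_of_notMem (x := j) (by simp)

theorem rank_lt_rank {x : ι → α} {i j : ι} (h : x i < x j) : rank x i < rank x j :=
  card_lt_card <| (ssubset_iff_of_subset fun k hk => by
    simpa using (mem_filter.mp hk).2.trans h).mpr ⟨i, by simpa using h, by simp⟩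

theorem rank_injective {x : ι → α} (hx : Function.Injective x) :
    Function.Injective (rank x) := by
  intro i j hij
  by_contra hne
  rcases lt_or_gt_of_ne (hx.ne hne) with h | h
  · exact (rank_lt_rank h).ne hij
  · exact (rank_lt_rank h).ne' hij

theorem rank_comp_perm (x : ι → α) (σ : Equiv.Perm ι) (j : ι) :
    rank (fun i => x (σ i)) j = rank x (σ j) :=
  card_equiv σ (by simp)

theorem image_rank_eq_range {x : ι → α} (hx : Function.Injective x) :
    univ.image (rank x) = range (Fintype.card ι) :=
  eq_of_subset_of_card_le (fun _ hm => by
      obtain ⟨j, -, rfl⟩ := mem_image.mp hm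
      exact mem_range.mpr (rank_lt_card x j))
    (by rw [card_image_of_injective _ (rank_injective hx), card_range, card_univ])

theorem card_filter_rank_lt {x : ι → α} (hx : Function.Injective x) {k : ℕ}
    (hk : k ≤ Fintype.card ι) : #{j | rank x j < k} = k := by
  rw [← card_image_of_injective _ (rank_injective hx), ← filter_image (p := (· < k)),
    image_rank_eq_range hx, ← Nat.Iio_eq_range, Iio_filter_lt, Nat.card_Iio, min_eq_right hk]

theorem rank_last {n : ℕ} (x : Fin (n + 1) → α) :
    rank x (Fin.last n) = #{i : Fin n | x i.castSucc < x (Fin.last n)} := by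
  rw [rank, card_filter, card_filter, Fin.sum_univ_castSucc]
  simp

end Rank

section Exchangeable

variable {ι Ω : Type*} [MeasurableSpace Ω] {μ : Measure Ω}

theorem sum_measure_eq_of_ae_card_eq [Fintype ι] {A : ι → Set Ω}
    [∀ ω, DecidablePred (ω ∈ A ·)] (hA : ∀ j, MeasurableSet (A j)) {k : ℕ}
    (hk : ∀ᵐ ω ∂μ, #{j | ω ∈ A j} = k) :
    ∑ j, μ (A j) = k * μ Set.univ := by
  calc ∑ j, μ (A j) = ∑ j, ∫⁻ ω, (A j).indicator 1 ω ∂μ := by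
        simp only [lintegral_indicator_one (hA _)]
    _ = ∫⁻ ω, ∑ j, (A j).indicator 1 ω ∂μ :=
        (lintegral_finsetSum _ fun j _ => measurable_one.indicator (hA j)).symm
    _ = ∫⁻ _, (k : ENNReal) ∂μ := lintegral_congr_ae <| hk.mono fun ω hω => by
        rw [← hω, card_filter]
        simp [Set.indicator_apply]
    _ = k * μ Set.univ := lintegral_const _

def Exchangeable (μ : Measure Ω) {β : Type*} [MeasurableSpace β] (X : ι → Ω → β) :
    Prop :=
  ∀ σ : Equiv.Perm ι, μ.map (fun ω i => X (σ i) ω) = μ.map (fun ω i => X i ω)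

theorem Exchangeable.measure_preimage_perm {β : Type*} [MeasurableSpace β] {X : ι → Ω → β}
    (hX : Exchangeable μ X) (hmeas : ∀ i, Measurable (X i)) (σ : Equiv.Perm ι)
    {S : Set (ι → β)} (hS : MeasurableSet S) :
    μ {ω | (fun i => X (σ i) ω) ∈ S} = μ {ω | (fun i => X i ω) ∈ S} := by
  have := congrArg (· S) (hX σ)
  rwa [Measure.map_apply (by fun_prop) hS, Measure.map_apply (by fun_prop) hS] at this

theorem measurableSet_rank_lt [Fintype ι] (j : ι) (k : ℕ) :
    MeasurableSet {x : ι → ℝ | rank x j < k} := by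
  have : Measurable fun x : ι → ℝ => rank x j := by
    simp only [rank, card_filter]
    exact Finset.measurable_sum _ fun i _ => Measurable.ite
      (measurableSet_lt (measurable_pi_apply i) (measurable_pi_apply j)) measurable_const
      measurable_const
  exact this (MeasurableSet.of_discrete (s := Set.Iio k))

theorem Exchangeable.measure_rank_lt_eq [Fintype ι] [DecidableEq ι] {X : ι → Ω → ℝ}
    (hX : Exchangeable μ X) (hmeas : ∀ i, Measurable (X i)) (i j : ι) (k : ℕ) :
    μ {ω | rank (X · ω) i < k} = μ {ω | rank (X · ω) j < k} := by
  have hswap : {ω | rank (X · ω) i < k} =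
      {ω | (fun l => X (Equiv.swap i j l) ω) ∈ {x | rank x j < k}} := Set.ext fun ω => by
    simp only [Set.mem_ofPred_eq, rank_comp_perm (X · ω), Equiv.swap_apply_right]
  rw [hswap]
  exact hX.measure_preimage_perm hmeas _ (measurableSet_rank_lt j k)

theorem Exchangeable.card_mul_measure_rank_lt [Fintype ι] [DecidableEq ι]
    [IsProbabilityMeasure μ] {X : ι → Ω → ℝ} (hX : Exchangeable μ X)
    (hmeas : ∀ i, Measurable (X i)) (hinj : ∀ᵐ ω ∂μ, Function.Injective (X · ω))
    (j : ι) {k : ℕ} (hk : k ≤ Fintype.card ι) :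
    Fintype.card ι * μ {ω | rank (X · ω) j < k} = k := by
  have hsum := sum_measure_eq_of_ae_card_eq (μ := μ) (A := fun i => {ω | rank (X · ω) i < k})
    (fun i => measurable_pi_lambda _ hmeas (measurableSet_rank_lt i k))
    (hinj.mono fun ω hω => card_filter_rank_lt hω hk)
  simpa [hX.measure_rank_lt_eq hmeas _ j] using hsum

end Exchangeable

theorem stmt_1_general {Ω : Type*} [MeasurableSpace Ω] (μ : Measure Ω) [IsProbabilityMeasure μ]
    (n : ℕ) (X : Fin (n + 1) → Ω → ℝ)
    (hmeas : ∀ i, Measurable (X i))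
    (hexch : ∀ σ : Equiv.Perm (Fin (n + 1)),
      Measure.map (fun ω => fun i => X (σ i) ω) μ = Measure.map (fun ω => fun i => X i ω) μ)
    (hdistinct : ∀ᵐ ω ∂μ, Function.Injective fun i => X i ω)
    (ε : ℝ)
    (k : ℕ) (hk : k = ⌈(1 - ε) * (n + 1)⌉₊) (hkn : k ≤ n) (hk1 : 1 ≤ k)
    (q : Ω → ℝ)
    (hq : ∀ ω, q ω =
      ((List.ofFn fun i : Fin n => X i.castSucc ω).insertionSort (· ≤ ·)).getD (k - 1) 0) :
    (μ {ω | X (Fin.last n) ω ≤ q ω}).toReal ≥ 1 - ε := by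
  have hevent : {ω | X (Fin.last n) ω ≤ q ω} = {ω | rank (X · ω) (Fin.last n) < k} := by
    ext ω
    rw [Set.mem_ofPred_eq, Set.mem_ofPred_eq, hq,
      List.le_insertionSort_getD_iff _ _ (by rw [List.length_ofFn]; omega), List.countP_ofFn,
      rank_last]
    omega
  have hrank := Exchangeable.card_mul_measure_rank_lt hexch hmeas hdistinct (Fin.last n)
    (k := k) (by rw [Fintype.card_fin]; omega)
  rw [← hevent] at hrank
  have hreal : ((n + 1 : ℕ) : ℝ) * (μ {ω | X (Fin.last n) ω ≤ q ω}).toReal = k := by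
    simpa only [ENNReal.toReal_mul, ENNReal.toReal_natCast, Fintype.card_fin]
      using congrArg ENNReal.toReal hrank
  have hceil : (1 - ε) * (n + 1) ≤ k := hk ▸ Nat.le_ceil _
  push_cast at hreal
  exact le_of_mul_le_mul_left (by linarith) (by positivity : (0 : ℝ) < n + 1)

theorem stmt_1 {Ω : Type*} [MeasurableSpace Ω] (μ : Measure Ω) [IsProbabilityMeasure μ]
    (n : ℕ) (hn : 0 < n) (X : Fin (n + 1) → Ω → ℝ)
    (hmeas : ∀ i, Measurable (X i))
    (hexch : ∀ σ : Equiv.Perm (Fin (n + 1)),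
      Measure.map (fun ω => fun i => X (σ i) ω) μ = Measure.map (fun ω => fun i => X i ω) μ)
    (hdistinct : ∀ᵐ ω ∂μ, Function.Injective fun i => X i ω)
    (ε : ℝ) (hε : 0 < ε) (hε1 : ε < 1)
    (k : ℕ) (hk : k = ⌈(1 - ε) * (n + 1)⌉₊) (hkn : k ≤ n) (hk1 : 1 ≤ k)
    (q : Ω → ℝ)
    (hq : ∀ ω, q ω =
      ((List.ofFn fun i : Fin n => X i.castSucc ω).insertionSort (· ≤ ·)).getD (k - 1) 0) :
    (μ {ω | X (Fin.last n) ω ≤ q ω}).toReal ≥ 1 - ε :=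
  stmt_1_general μ n X hmeas hexch hdistinct ε k hk hkn hk1 q hq
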